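/- Let b ≥ 1, c ≥ b+1, α ≥ 1, β ≥ α+1, p > 0 and z ∈ ℝ. Then ₁F₁^{(α,β;p)}(b;c;z) ≤ (λ_{α−1,β−α−1}/(4 p B(α,β−α))) · ₁F₁(b;c;z). -/

import Mathlib

open Real MeasureTheory

/-- Classical Euler beta function `B(x,y) = ∫₀¹ t^(x-1) (1-t)^(y-1) dt`. -/
noncomputable def eulerBeta (x y : ℝ) : ℝ :=
  ∫ t in (0:ℝ)..1, t ^ (x - 1) * (1 - t) ^ (y - 1)

/-- `λ_{x,y} = x^x y^y / (x+y)^(x+y)`; the convention `0^0 = 1` is automatic for `rpow`. -/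
noncomputable def lam (x y : ℝ) : ℝ := x ^ x * y ^ y / (x + y) ^ (x + y)

/-- Pochhammer symbol `(x)_n = x (x+1) ⋯ (x+n-1)`. -/
noncomputable def poch (x : ℝ) (n : ℕ) : ℝ := ∏ k ∈ Finset.range n, (x + k)

/-- Confluent hypergeometric (Kummer) function `₁F₁(b;c;z)`. -/
noncomputable def oneF1 (b c z : ℝ) : ℝ :=
  ∑' n : ℕ, poch b n / poch c n * z ^ n / (Nat.factorial n : ℝ)

/-- Generalized confluent hypergeometric function `₁F₁^(α,β;p)(b;c;z)` (integral form). -/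
noncomputable def genOneF1 (α β p b c z : ℝ) : ℝ :=
  (1 / eulerBeta b (c - b)) *
    ∫ t in (0:ℝ)..1,
      t ^ (b - 1) * (1 - t) ^ (c - b - 1) * Real.exp (z * t) * oneF1 α β (-p / (t * (1 - t)))

/-!
For `α ≥ 1` and `β ≥ α + 1` the Kummer kernel `t^(α-1) (1-t)^(β-α-1)` is bounded on `[0,1]` by
its maximum `λ_{α-1,β-α-1}`, so the integral representation of `₁F₁` and `∫₀¹ e^(-qt) dt ≤ 1/q`
give `0 ≤ ₁F₁(α;β;-q) ≤ λ / (q B(α,β-α))` for `q > 0`. Since `t(1-t) ≤ 1/4`, the factor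
`₁F₁(α;β;-p/(t(1-t)))` in the integrand of `₁F₁^(α,β;p)(b;c;z)` lies in `[0, λ/(4p B(α,β-α))]`;
pulling this constant out leaves the Euler integral of `₁F₁(b;c;z)`, which is proved by expanding
`e^(zt)` and integrating termwise against the Beta kernel.
-/

open Set
open scoped Nat

lemma ofReal_rpow_mul_one_sub_rpow {x y t : ℝ} (ht₀ : 0 ≤ t) (ht₁ : t ≤ 1) :
    (t : ℂ) ^ ((x : ℂ) - 1) * (1 - (t : ℂ)) ^ ((y : ℂ) - 1) =
      ((t ^ (x - 1) * (1 - t) ^ (y - 1) : ℝ) : ℂ) := by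
  rw [Complex.ofReal_mul, Complex.ofReal_cpow ht₀, Complex.ofReal_cpow (sub_nonneg.2 ht₁)]
  push_cast
  rfl

lemma rpow_mul_one_sub_rpow_nonneg {x y t : ℝ} (ht : t ∈ Icc (0:ℝ) 1) :
    0 ≤ t ^ x * (1 - t) ^ y :=
  mul_nonneg (rpow_nonneg ht.1 x) (rpow_nonneg (sub_nonneg.2 ht.2) y)

lemma betaIntegral_ofReal (x y : ℝ) : Complex.betaIntegral x y = eulerBeta x y := by
  rw [Complex.betaIntegral, eulerBeta, ← intervalIntegral.integral_ofReal]
  refine intervalIntegral.integral_congr fun t ht => ?_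
  rw [uIcc_of_le zero_le_one] at ht
  exact ofReal_rpow_mul_one_sub_rpow ht.1 ht.2

lemma eulerBeta_eq_integral_Ioo (x y : ℝ) :
    eulerBeta x y = ∫ t in Ioo (0:ℝ) 1, t ^ (x - 1) * (1 - t) ^ (y - 1) := by
  rw [eulerBeta, intervalIntegral.integral_of_le zero_le_one, integral_Ioc_eq_integral_Ioo]

lemma integrableOn_rpow_mul_one_sub_rpow {x y : ℝ} (hx : 0 < x) (hy : 0 < y) :
    IntegrableOn (fun t => t ^ (x - 1) * (1 - t) ^ (y - 1)) (Ioo (0:ℝ) 1) := by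
  have h := (intervalIntegrable_iff_integrableOn_Ioc_of_le zero_le_one).1
    (Complex.betaIntegral_convergent (u := x) (v := y) (by simpa) (by simpa))
  refine (IntegrableOn.congr_fun (Integrable.re h) (fun t ht => ?_) measurableSet_Ioc).mono_set
    Ioo_subset_Ioc_self
  simp only [RCLike.re_to_complex, ofReal_rpow_mul_one_sub_rpow ht.1.le ht.2, Complex.ofReal_re]

lemma eulerBeta_eq_Gamma {x y : ℝ} (hx : 0 < x) (hy : 0 < y) :
    eulerBeta x y = Gamma x * Gamma y / Gamma (x + y) := by
  have h := Complex.Gamma_mul_Gamma_eq_betaIntegral (s := x) (t := y) (by simpa) (by simpa)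
  rw [betaIntegral_ofReal, ← Complex.ofReal_add, Complex.Gamma_ofReal, Complex.Gamma_ofReal,
    Complex.Gamma_ofReal] at h
  rw [eq_div_iff (Gamma_pos_of_pos (add_pos hx hy)).ne']
  have h' : Gamma x * Gamma y = Gamma (x + y) * eulerBeta x y := by exact_mod_cast h
  linarith

lemma eulerBeta_pos {x y : ℝ} (hx : 0 < x) (hy : 0 < y) : 0 < eulerBeta x y := by
  rw [eulerBeta_eq_Gamma hx hy]
  have := Gamma_pos_of_pos hx
  have := Gamma_pos_of_pos hy
  have := Gamma_pos_of_pos (add_pos hx hy)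
  positivity

lemma poch_pos {x : ℝ} (hx : 0 < x) (n : ℕ) : 0 < poch x n :=
  Finset.prod_pos fun _ _ => by positivity

lemma Gamma_add_nat {x : ℝ} (hx : 0 < x) (n : ℕ) : Gamma (x + n) = Gamma x * poch x n := by
  induction n with
  | zero => simp [poch]
  | succ n ih =>
    rw [Nat.cast_succ, ← add_assoc, Gamma_add_one (by positivity), ih, poch, poch,
      Finset.prod_range_succ]
    ring

lemma eulerBeta_add_nat {x y : ℝ} (hx : 0 < x) (hy : 0 < y) (n : ℕ) :
    eulerBeta (x + n) y = eulerBeta x y * (poch x n / poch (x + y) n) := by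
  rw [eulerBeta_eq_Gamma (by positivity) hy, eulerBeta_eq_Gamma hx hy, add_right_comm,
    Gamma_add_nat hx, Gamma_add_nat (add_pos hx hy)]
  have := (Gamma_pos_of_pos (add_pos hx hy)).ne'
  have := (poch_pos (add_pos hx hy) n).ne'
  field_simp

lemma integral_rpow_add_nat_mul_one_sub_rpow {x y : ℝ} (hx : 0 < x) (hy : 0 < y) (n : ℕ) :
    ∫ t in Ioo (0:ℝ) 1, t ^ n * (t ^ (x - 1) * (1 - t) ^ (y - 1)) =
      eulerBeta x y * (poch x n / poch (x + y) n) := by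
  rw [← eulerBeta_add_nat hx hy, eulerBeta_eq_integral_Ioo]
  refine setIntegral_congr_fun measurableSet_Ioo fun t ht => ?_
  rw [add_sub_right_comm, rpow_add ht.1, rpow_natCast]
  ring

theorem integral_rpow_mul_one_sub_rpow_mul_exp {b c : ℝ} (hb : 0 < b) (hbc : b < c) (z : ℝ) :
    ∫ t in Ioo (0:ℝ) 1, t ^ (b - 1) * (1 - t) ^ (c - b - 1) * exp (z * t) =
      eulerBeta b (c - b) * oneF1 b c z := by
  have hcb : 0 < c - b := sub_pos.2 hbc
  set F : ℕ → ℝ → ℝ := fun n t => z ^ n / n ! * (t ^ n * (t ^ (b - 1) * (1 - t) ^ (c - b - 1)))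
  have hdom (n : ℕ) := (integrableOn_rpow_mul_one_sub_rpow hb hcb).const_mul (|z| ^ n / n !)
  have hF_le (n : ℕ) : ∀ t ∈ Ioo (0:ℝ) 1,
      ‖F n t‖ ≤ |z| ^ n / n ! * (t ^ (b - 1) * (1 - t) ^ (c - b - 1)) := by
    intro t ht
    have hk := rpow_mul_one_sub_rpow_nonneg (x := b - 1) (y := c - b - 1) (Ioo_subset_Icc_self ht)
    calc ‖F n t‖ = |z ^ n / n ! * t ^ n| * (t ^ (b - 1) * (1 - t) ^ (c - b - 1)) := by
          rw [Real.norm_eq_abs, ← abs_of_nonneg hk, ← abs_mul, mul_assoc]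
      _ ≤ |z| ^ n / n ! * (t ^ (b - 1) * (1 - t) ^ (c - b - 1)) := by
          gcongr
          rw [abs_mul, abs_div, abs_pow, Nat.abs_cast, abs_of_nonneg (pow_nonneg ht.1.le n)]
          exact mul_le_of_le_one_right (by positivity) (pow_le_one₀ ht.1.le ht.2.le)
  have hF_int (n : ℕ) : IntegrableOn (F n) (Ioo 0 1) :=
    (hdom n).mono' (by fun_prop) ((ae_restrict_iff' measurableSet_Ioo).2 (.of_forall (hF_le n)))
  have hF_eval (n : ℕ) : ∫ t in Ioo (0:ℝ) 1, F n t =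
      eulerBeta b (c - b) * (poch b n / poch c n * z ^ n / n !) := by
    rw [integral_const_mul, integral_rpow_add_nat_mul_one_sub_rpow hb hcb, add_sub_cancel]
    ring
  have hF_norm (n : ℕ) : ∫ t in Ioo (0:ℝ) 1, ‖F n t‖ ≤ |z| ^ n / n ! * eulerBeta b (c - b) := by
    rw [eulerBeta_eq_integral_Ioo, ← integral_const_mul]
    exact setIntegral_mono_on (hF_int n).norm (hdom n) measurableSet_Ioo (hF_le n)
  have hF_sum : Summable fun n => ∫ t in Ioo (0:ℝ) 1, ‖F n t‖ :=
    .of_nonneg_of_le (fun n => integral_nonneg fun _ => norm_nonneg _) hF_norm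
      ((summable_pow_div_factorial |z|).mul_right _)
  have hexp : ∀ t ∈ Ioo (0:ℝ) 1,
      t ^ (b - 1) * (1 - t) ^ (c - b - 1) * exp (z * t) = ∑' n, F n t := by
    intro t _
    simp only [F, exp_eq_exp_ℝ, NormedSpace.exp_eq_tsum_div, ← tsum_mul_left, mul_pow]
    exact tsum_congr fun n => by ring
  rw [setIntegral_congr_fun measurableSet_Ioo hexp, ← integral_tsum_of_summable_integral_norm
    hF_int hF_sum, oneF1, ← tsum_mul_left]
  exact tsum_congr hF_eval

lemma oneF1_nonneg {α β : ℝ} (hα : 0 < α) (hαβ : α < β) (z : ℝ) : 0 ≤ oneF1 α β z := by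
  have h := integral_rpow_mul_one_sub_rpow_mul_exp hα hαβ z
  refine nonneg_of_mul_nonneg_right ?_ (eulerBeta_pos hα (sub_pos.2 hαβ))
  rw [← h]
  exact setIntegral_nonneg measurableSet_Ioo fun t ht =>
    mul_nonneg (rpow_mul_one_sub_rpow_nonneg (Ioo_subset_Icc_self ht)) (exp_pos _).le

lemma lam_nonneg {x y : ℝ} (hx : 0 ≤ x) (hy : 0 ≤ y) : 0 ≤ lam x y := by
  unfold lam
  positivity

lemma lam_zero_left {y : ℝ} (hy : 0 ≤ y) : lam 0 y = 1 := by
  rcases hy.eq_or_lt with rfl | hy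
  · simp [lam]
  · rw [lam, rpow_zero, zero_add, one_mul, div_self (rpow_pos_of_pos hy y).ne']

lemma lam_comm (x y : ℝ) : lam x y = lam y x := by
  rw [lam, lam, mul_comm, add_comm]

lemma rpow_mul_one_sub_rpow_le_lam {x y s : ℝ} (hx : 0 ≤ x) (hy : 0 ≤ y) (hs₀ : 0 ≤ s)
    (hs₁ : s ≤ 1) : s ^ x * (1 - s) ^ y ≤ lam x y := by
  have h1s : 0 ≤ 1 - s := sub_nonneg.2 hs₁
  rcases hx.eq_or_lt with rfl | hx
  · rw [rpow_zero, one_mul, lam_zero_left hy]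
    exact rpow_le_one h1s (by linarith) hy
  rcases hy.eq_or_lt with rfl | hy
  · rw [rpow_zero, mul_one, lam_comm, lam_zero_left hx.le]
    exact rpow_le_one hs₀ hs₁ hx.le
  have hxy : 0 < x + y := add_pos hx hy
  set u := x / (x + y)
  set w := y / (x + y)
  have hu : 0 < u := div_pos hx hxy
  have hw : 0 < w := div_pos hy hxy
  have hux : u * (x + y) = x := div_mul_cancel₀ x hxy.ne'
  have hwy : w * (x + y) = y := div_mul_cancel₀ y hxy.ne'
  have hlam : lam x y = u ^ x * w ^ y := by
    rw [lam, div_rpow hx.le hxy.le, div_rpow hy.le hxy.le, rpow_add hxy]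
    ring
  have hamgm : (s / u) ^ u * ((1 - s) / w) ^ w ≤ 1 := by
    refine (geom_mean_le_arith_mean2_weighted hu.le hw.le (by positivity) (by positivity)
      (by rw [← add_div, div_self hxy.ne'])).trans_eq ?_
    field_simp
    ring
  have hpow := rpow_le_one (by positivity) hamgm hxy.le
  rw [mul_rpow (by positivity) (by positivity), ← rpow_mul (by positivity),
    ← rpow_mul (by positivity), hux, hwy, div_rpow hs₀ hu.le, div_rpow h1s hw.le,
    div_mul_div_comm, div_le_one (by positivity)] at hpow
  rwa [hlam]

lemma setIntegral_exp_neg_mul_Ioo_le {q : ℝ} (hq : 0 < q) :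
    ∫ t in Ioo (0:ℝ) 1, exp (-q * t) ≤ 1 / q := by
  calc ∫ t in Ioo (0:ℝ) 1, exp (-q * t) ≤ ∫ t in Ioi (0:ℝ), exp (-q * t) :=
        setIntegral_mono_set (integrableOn_exp_mul_Ioi (neg_neg_of_pos hq) 0)
          (.of_forall fun _ => (exp_pos _).le) (.of_forall Ioo_subset_Ioi_self)
    _ = 1 / q := by
        rw [integral_exp_mul_Ioi (neg_neg_of_pos hq), mul_zero, exp_zero, neg_div_neg_eq]

lemma setIntegral_mul_le_mul_setIntegral {X : Type*} [MeasurableSpace X] {μ : Measure X}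
    {s : Set X} (hs : MeasurableSet s) {f g : X → ℝ} {K : ℝ} (hg : IntegrableOn g s μ)
    (hf : ∀ t ∈ s, 0 ≤ f t ∧ f t ≤ K) (hg₀ : ∀ t ∈ s, 0 ≤ g t) :
    ∫ t in s, g t * f t ∂μ ≤ K * ∫ t in s, g t ∂μ := by
  rw [← integral_const_mul]
  refine integral_mono_of_nonneg ?_ (hg.const_mul K) ?_ <;>
    refine (ae_restrict_iff' hs).2 (.of_forall fun t ht => ?_)
  · exact mul_nonneg (hg₀ t ht) (hf t ht).1
  · simpa only [mul_comm K] using mul_le_mul_of_nonneg_left (hf t ht).2 (hg₀ t ht)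

lemma oneF1_neg_le {α β q : ℝ} (hα : 1 ≤ α) (hβ : α + 1 ≤ β) (hq : 0 < q) :
    oneF1 α β (-q) ≤ lam (α - 1) (β - α - 1) / (q * eulerBeta α (β - α)) := by
  have hB := eulerBeta_pos (by linarith : 0 < α) (by linarith : 0 < β - α)
  have hlam := lam_nonneg (by linarith : 0 ≤ α - 1) (by linarith : 0 ≤ β - α - 1)
  have h : eulerBeta α (β - α) * oneF1 α β (-q) ≤ lam (α - 1) (β - α - 1) * (1 / q) := by
    rw [← integral_rpow_mul_one_sub_rpow_mul_exp (by linarith) (by linarith)]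
    simp_rw [mul_comm _ (exp _)]
    calc _ ≤ lam (α - 1) (β - α - 1) * ∫ t in Ioo (0:ℝ) 1, exp (-q * t) :=
          setIntegral_mul_le_mul_setIntegral measurableSet_Ioo
            ((integrableOn_exp_mul_Ioi (neg_neg_of_pos hq) 0).mono_set Ioo_subset_Ioi_self)
            (fun t ht => ⟨rpow_mul_one_sub_rpow_nonneg (Ioo_subset_Icc_self ht),
              rpow_mul_one_sub_rpow_le_lam (by linarith) (by linarith) ht.1.le ht.2.le⟩)
            (fun t _ => (exp_pos _).le)
      _ ≤ _ := by gcongr; exact setIntegral_exp_neg_mul_Ioo_le hq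
  rw [le_div_iff₀ (by positivity)]
  rw [mul_one_div, le_div_iff₀ hq] at h
  linarith

lemma oneF1_neg_div_mul_one_sub_le {α β p t : ℝ} (hα : 1 ≤ α) (hβ : α + 1 ≤ β) (hp : 0 < p)
    (ht : t ∈ Ioo (0:ℝ) 1) :
    oneF1 α β (-p / (t * (1 - t))) ≤ lam (α - 1) (β - α - 1) / (4 * p * eulerBeta α (β - α)) := by
  have ht' : 0 < t * (1 - t) := mul_pos ht.1 (sub_pos.2 ht.2)
  have h4p : 4 * p ≤ p / (t * (1 - t)) := by
    rw [le_div_iff₀ ht']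
    nlinarith [sq_nonneg (2 * t - 1)]
  have := eulerBeta_pos (by linarith : 0 < α) (by linarith : 0 < β - α)
  have := lam_nonneg (by linarith : 0 ≤ α - 1) (by linarith : 0 ≤ β - α - 1)
  rw [neg_div]
  refine (oneF1_neg_le hα hβ (by positivity)).trans ?_
  gcongr

theorem stmt5 (b c α β p z : ℝ) (hb : 1 ≤ b) (hc : b + 1 ≤ c) (hα : 1 ≤ α)
    (hβ : α + 1 ≤ β) (hp : 0 < p) :
    genOneF1 α β p b c z ≤
      lam (α - 1) (β - α - 1) / (4 * p * eulerBeta α (β - α)) * oneF1 b c z := by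
  have hb₀ : 0 < b := by linarith
  have hbc : b < c := by linarith
  have hB := eulerBeta_pos hb₀ (sub_pos.2 hbc)
  have hF (t : ℝ) (ht : t ∈ Ioo (0:ℝ) 1) : 0 ≤ oneF1 α β (-p / (t * (1 - t))) ∧
      oneF1 α β (-p / (t * (1 - t))) ≤ lam (α - 1) (β - α - 1) / (4 * p * eulerBeta α (β - α)) :=
    ⟨oneF1_nonneg (by linarith) (by linarith) _, oneF1_neg_div_mul_one_sub_le hα hβ hp ht⟩
  have hG : IntegrableOn (fun t => t ^ (b - 1) * (1 - t) ^ (c - b - 1) * exp (z * t)) (Ioo 0 1) :=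
    (integrableOn_rpow_mul_one_sub_rpow hb₀ (sub_pos.2 hbc)).mul_continuousOn_of_subset
      (by fun_prop) measurableSet_Ioo isCompact_Icc Ioo_subset_Icc_self
  rw [genOneF1, intervalIntegral.integral_of_le zero_le_one, integral_Ioc_eq_integral_Ioo,
    one_div_mul_eq_div, div_le_iff₀ hB]
  refine (setIntegral_mul_le_mul_setIntegral measurableSet_Ioo hG hF fun t ht =>
    mul_nonneg (rpow_mul_one_sub_rpow_nonneg (Ioo_subset_Icc_self ht)) (exp_pos _).le).trans_eq ?_
  rw [integral_rpow_mul_one_sub_rpow_mul_exp hb₀ hbc]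
  ring
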